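/- arXiv:1611.04349 — 7 statements merged into one kernel-verified Lean document; each statement's English description precedes it below -/
import Mathlib

section
/- Every t-frameproof code is a strongly t̄-separable code. That is, if C is a t-FPC(n,M,q), then for any C₀ ⊆ C with 1 ≤ |C₀| ≤ t, the intersection of all subsets C' ⊆ C with desc(C') = desc(C₀) equals C₀. -/
open Finset

/-- The descendant code of a set of codewords: all words whose `i`-th coordinate
appears as the `i`-th coordinate of some codeword, for every `i`. -/
def desc {n : ℕ} {Q : Type*} (C₀ : Finset (Fin n → Q)) : Set (Fin n → Q) :=
  {x | ∀ i, ∃ c ∈ C₀, c i = x i}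

/-- `C` is a `t`-frameproof code. -/
def IsFPC {n : ℕ} {Q : Type*} (t : ℕ) (C : Finset (Fin n → Q)) : Prop :=
  ∀ C' ⊆ C, C'.card ≤ t → desc C' ∩ (C : Set (Fin n → Q)) = (C' : Set (Fin n → Q))

/-- `C` is a `t̄`-separable code. -/
def IsSC {n : ℕ} {Q : Type*} (t : ℕ) (C : Finset (Fin n → Q)) : Prop :=
  ∀ C₁ ⊆ C, ∀ C₂ ⊆ C, 1 ≤ C₁.card → C₁.card ≤ t → 1 ≤ C₂.card → C₂.card ≤ t →
    C₁ ≠ C₂ → desc C₁ ≠ desc C₂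

/-- `C` is a strongly `t̄`-separable code. -/
def IsSSC {n : ℕ} {Q : Type*} (t : ℕ) (C : Finset (Fin n → Q)) : Prop :=
  ∀ C₀ ⊆ C, 1 ≤ C₀.card → C₀.card ≤ t →
    (⋂ C' ∈ {C' : Finset (Fin n → Q) | C' ⊆ C ∧ desc C' = desc C₀},
      (C' : Set (Fin n → Q))) = (C₀ : Set (Fin n → Q))

/-- Every t-FPC(n,M,q) is a t̄-SSC(n,M,q). -/
theorem fpc_is_ssc {Q : Type*} [Fintype Q] (n M q t : ℕ)
    (hq : Fintype.card Q = q) (C : Finset (Fin n → Q)) (hM : C.card = M)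
    (hFPC : IsFPC t C) : IsSSC t C := by
  intro C₀ hC₀ h1 ht
  have hd : desc C₀ ∩ (C : Set (Fin n → Q)) = (C₀ : Set (Fin n → Q)) := hFPC C₀ hC₀ ht
  have key : ∀ C' : Finset (Fin n → Q), C' ⊆ C → desc C' = desc C₀ → C' = C₀ := by
    intro C' hC' hdesc
    have hsub : C' ⊆ C₀ := by
      intro x hx
      have hxd : x ∈ desc C₀ := by
        rw [← hdesc]; exact fun i => ⟨x, hx, rfl⟩
      have : x ∈ desc C₀ ∩ (C : Set (Fin n → Q)) := ⟨hxd, hC' hx⟩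
      rw [hd] at this
      exact_mod_cast this
    have hd' : desc C' ∩ (C : Set (Fin n → Q)) = (C' : Set (Fin n → Q)) :=
      hFPC C' hC' (le_trans (Finset.card_le_card hsub) ht)
    refine Finset.Subset.antisymm hsub ?_
    intro x hx
    have hxd : x ∈ desc C' := by
      rw [hdesc]; exact fun i => ⟨x, hx, rfl⟩
    have : x ∈ desc C' ∩ (C : Set (Fin n → Q)) := ⟨hxd, hC₀ hx⟩
    rw [hd'] at this
    exact_mod_cast this
  ext x
  simp only [Set.mem_iInter, Set.mem_setOf_eq]
  constructor
  · intro h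
    exact h C₀ ⟨hC₀, rfl⟩
  · intro hx C' ⟨hC', hdesc⟩
    rw [key C' hC' hdesc]
    exact hx
end

section
/- Every strongly t̄-separable code with t ≥ 2 is a (t−1)-frameproof code. -/
open Finset

/-- Every t̄-SSC with t ≥ 2 is a (t-1)-FPC. -/
theorem ssc_is_fpc {Q : Type*} [Fintype Q] (n M q t : ℕ) (ht : 2 ≤ t)
    (hq : Fintype.card Q = q) (C : Finset (Fin n → Q)) (hM : C.card = M)
    (hSSC : IsSSC t C) : IsFPC (t - 1) C := by
  classical
  intro C' hC' hcard
  apply Set.Subset.antisymm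
  · rintro x ⟨hxd, hxC⟩
    simp only [Set.mem_inter_iff, Finset.mem_coe, Set.mem_setOf_eq] at *
    set C₀ : Finset (Fin n → Q) := insert x C' with hC₀
    have hsub : C₀ ⊆ C := Finset.insert_subset hxC hC'
    have hdesc : desc C' = desc C₀ := by
      apply Set.Subset.antisymm
      · intro y hy i
        obtain ⟨c, hc, hci⟩ := hy i
        exact ⟨c, Finset.mem_insert_of_mem hc, hci⟩
      · intro y hy i
        obtain ⟨c, hc, hci⟩ := hy i
        rcases Finset.mem_insert.mp hc with h | h
        · obtain ⟨c', hc', hc'i⟩ := hxd i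
          exact ⟨c', hc', by rw [hc'i, ← h, hci]⟩
        · exact ⟨c, h, hci⟩
    have h1 : 1 ≤ C₀.card := Finset.card_pos.mpr ⟨x, Finset.mem_insert_self x C'⟩
    have h2 : C₀.card ≤ t := by
      calc C₀.card ≤ C'.card + 1 := Finset.card_insert_le x C'
        _ ≤ (t - 1) + 1 := by omega
        _ = t := by omega
    have key := hSSC C₀ hsub h1 h2
    have hx : x ∈ (⋂ D ∈ {D : Finset (Fin n → Q) | D ⊆ C ∧ desc D = desc C₀},
        (D : Set (Fin n → Q))) := by
      rw [key]; exact Finset.mem_insert_self x C'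
    have := Set.mem_iInter₂.mp hx C' ⟨hC', hdesc⟩
    exact this
  · intro x hx
    refine ⟨fun i => ⟨x, hx, rfl⟩, hC' hx⟩
end

section
/- A code C of length 2 over an alphabet of size q is a strongly 2̄-separable code if and only if it is a 2̄-separable code. -/
open Finset

lemma mem_desc_self {n : ℕ} {Q : Type*} {C₀ : Finset (Fin n → Q)} {c : Fin n → Q}
    (hc : c ∈ C₀) : c ∈ desc C₀ := fun _ => ⟨c, hc, rfl⟩

lemma eq_of_coords {Q : Type*} {c a : Fin 2 → Q} (h0 : c 0 = a 0) (h1 : c 1 = a 1) : c = a := by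
  funext i; fin_cases i <;> assumption

lemma mem_desc_pair {Q : Type*} [DecidableEq (Fin 2 → Q)] {a b x : Fin 2 → Q} :
    x ∈ desc ({a, b} : Finset (Fin 2 → Q)) ↔
      (a 0 = x 0 ∨ b 0 = x 0) ∧ (a 1 = x 1 ∨ b 1 = x 1) := by
  simp [desc, Fin.forall_fin_two, Set.mem_setOf_eq]

lemma key {Q : Type*} [DecidableEq (Fin 2 → Q)] {C C' : Finset (Fin 2 → Q)} (h : IsSC 2 C)
    {a b : Fin 2 → Q} (hsub : ({a,b} : Finset _) ⊆ C)
    (hC' : C' ⊆ C) (hd : desc C' = desc ({a,b} : Finset _)) : a ∈ C' := by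
  by_contra ha
  have haD : a ∈ desc C' := by rw [hd]; exact mem_desc_self (by simp)
  obtain ⟨c, hcC', hc0⟩ := haD 0
  obtain ⟨d, hdC', hd1⟩ := haD 1
  have hcD : c ∈ desc ({a,b} : Finset _) := by rw [← hd]; exact mem_desc_self hcC'
  have hdD : d ∈ desc ({a,b} : Finset _) := by rw [← hd]; exact mem_desc_self hdC'
  rw [mem_desc_pair] at hcD hdD
  have hc1 : b 1 = c 1 := by
    rcases hcD.2 with h1 | h1
    · exact absurd hcC' (by rw [eq_of_coords hc0 h1.symm]; exact ha)
    · exact h1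
  have hd0 : b 0 = d 0 := by
    rcases hdD.1 with h1 | h1
    · exact absurd hdC' (by rw [eq_of_coords h1.symm hd1]; exact ha)
    · exact h1
  have hsub' : ({c, d} : Finset _) ⊆ C := by
    intro x hx
    rcases Finset.mem_insert.1 hx with rfl | hx
    · exact hC' hcC'
    · exact hC' (Finset.mem_singleton.1 hx ▸ hdC')
  have hne : ({a, b} : Finset (Fin 2 → Q)) ≠ {c, d} := by
    intro he
    have : a ∈ ({c, d} : Finset (Fin 2 → Q)) := he ▸ (by simp)
    rcases Finset.mem_insert.1 this with rfl | hx
    · exact ha hcC'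
    · exact ha (Finset.mem_singleton.1 hx ▸ hdC')
  have hdesc : desc ({a, b} : Finset (Fin 2 → Q)) = desc {c, d} := by
    ext x
    rw [mem_desc_pair, mem_desc_pair, ← hc0, ← hd1, ← hc1, ← hd0]
    exact and_congr Iff.rfl or_comm
  exact h {a, b} hsub {c, d} hsub'
    (Finset.card_pos.2 ⟨a, by simp⟩) (Finset.card_insert_le _ _ |>.trans (by simp))
    (Finset.card_pos.2 ⟨c, by simp⟩) (Finset.card_insert_le _ _ |>.trans (by simp))
    hne hdesc

lemma mem_of_desc_eq {Q : Type*} [DecidableEq (Fin 2 → Q)] {C C₀ C' : Finset (Fin 2 → Q)}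
    (h : IsSC 2 C) (h0 : C₀ ⊆ C) (h1 : 1 ≤ C₀.card) (h2 : C₀.card ≤ 2)
    (hC' : C' ⊆ C) (hd : desc C' = desc C₀) {x : Fin 2 → Q} (hx : x ∈ C₀) : x ∈ C' := by
  obtain ⟨a, b, hab⟩ : ∃ a b, C₀ = {a, b} := by
    interval_cases hc : C₀.card
    · obtain ⟨a, rfl⟩ := Finset.card_eq_one.1 hc
      exact ⟨a, a, by simp⟩
    · obtain ⟨a, b, _, rfl⟩ := Finset.card_eq_two.1 hc
      exact ⟨a, b, rfl⟩
  subst hab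
  rcases Finset.mem_insert.1 hx with rfl | hx
  · exact key h h0 hC' hd
  · rw [Finset.mem_singleton.1 hx]
    rw [Finset.pair_comm] at h0 hd
    exact key h h0 hC' hd

/-- A code of length 2 is a 2̄-SSC iff it is a 2̄-SC. -/
theorem ssc_iff_sc_n2 {Q : Type*} [Fintype Q] (q : ℕ)
    (hq : Fintype.card Q = q) (C : Finset (Fin 2 → Q)) :
    IsSSC 2 C ↔ IsSC 2 C := by
  constructor
  · intro h C₁ h1 C₂ h2 hc11 hc12 hc21 hc22 hne hd
    apply hne
    have e1 := h C₁ h1 hc11 hc12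
    have e2 := h C₂ h2 hc21 hc22
    have s12 : (C₁ : Set (Fin 2 → Q)) ⊆ C₂ := by
      rw [← e1]; exact Set.biInter_subset_of_mem ⟨h2, hd.symm⟩
    have s21 : (C₂ : Set (Fin 2 → Q)) ⊆ C₁ := by
      rw [← e2]; exact Set.biInter_subset_of_mem ⟨h1, hd⟩
    exact Finset.coe_injective (Set.Subset.antisymm s12 s21)
  · intro h C₀ h0 h1 h2
    classical
    apply Set.Subset.antisymm
    · exact Set.biInter_subset_of_mem ⟨h0, rfl⟩
    · intro x hx
      refine Set.mem_iInter₂.2 fun C' hC' => ?_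
      exact Finset.mem_coe.2 (mem_of_desc_eq h h0 h1 h2 hC'.1 hC'.2 (Finset.mem_coe.1 hx))
end

section
/- Let C be a 3̄-separable code of length 3 over an alphabet of size q. Then for any subset C₀ ⊆ C with |C₀| ≤ 3, any codeword c ∈ C₀, and any codeword c' ∈ (desc(C₀) ∩ C) \ C₀, the Hamming distance d(c, c') is at least 2. -/
open Finset

/-- In a 3̄-SC(3,M,q), for any C₀ ⊆ C with |C₀| ≤ 3, any c ∈ C₀, and any
c' ∈ (desc(C₀) ∩ C) \ C₀, the Hamming distance d(c,c') is at least 2. -/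
theorem sc_hamming_distance {Q : Type*} [Fintype Q] [DecidableEq Q] (q : ℕ)
    (hq : Fintype.card Q = q) (C : Finset (Fin 3 → Q)) (hSC : IsSC 3 C)
    (C₀ : Finset (Fin 3 → Q)) (hC₀ : C₀ ⊆ C) (hcard : C₀.card ≤ 3)
    (c : Fin 3 → Q) (hc : c ∈ C₀)
    (c' : Fin 3 → Q) (hc' : c' ∈ (desc C₀ ∩ (C : Set (Fin 3 → Q))) \ (C₀ : Set (Fin 3 → Q))) :
    2 ≤ hammingDist c c' := by
  by_contra h
  push_neg at h
  obtain ⟨⟨hdesc, hc'C⟩, hc'not⟩ := hc'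
  simp only [Finset.mem_coe] at hc'not
  have hne : c ≠ c' := by rintro rfl; exact hc'not hc
  have hpos : 1 ≤ hammingDist c c' := Nat.one_le_iff_ne_zero.mpr (by
    simp [hammingDist_eq_zero, hne])
  have h1 : hammingDist c c' = 1 := le_antisymm (by omega) hpos
  rw [hammingDist, Finset.card_eq_one] at h1
  obtain ⟨i, hi⟩ := h1
  have hagree : ∀ k, k ≠ i → c k = c' k := by
    intro k hk
    by_contra hck
    have : k ∈ Finset.univ.filter fun j => c j ≠ c' j := by simp [hck]
    rw [hi] at this
    exact hk (Finset.mem_singleton.mp this)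
  have hci : c i ≠ c' i := by
    have : i ∈ Finset.univ.filter fun j => c j ≠ c' j := by rw [hi]; simp
    simpa using this
  obtain ⟨b, hbC₀, hbi⟩ := hdesc i
  have hc'ne_c : c' ≠ c := hne.symm
  have hc'ne_b : c' ≠ b := by rintro rfl; exact hc'not hbC₀
  have hsub1 : ({c, b} : Finset (Fin 3 → Q)) ⊆ C := by
    intro x hx
    simp at hx
    rcases hx with rfl | rfl
    · exact hC₀ hc
    · exact hC₀ hbC₀
  have hsub2 : ({c, b, c'} : Finset (Fin 3 → Q)) ⊆ C := by
    intro x hx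
    simp at hx
    rcases hx with rfl | rfl | rfl
    · exact hC₀ hc
    · exact hC₀ hbC₀
    · exact hc'C
  have hneq : ({c, b} : Finset (Fin 3 → Q)) ≠ ({c, b, c'} : Finset (Fin 3 → Q)) := by
    intro heq
    have : c' ∈ ({c, b} : Finset (Fin 3 → Q)) := by rw [heq]; simp
    simp at this
    rcases this with h' | h'
    · exact hc'ne_c h'
    · exact hc'ne_b h'
  have hdesceq : desc ({c, b} : Finset (Fin 3 → Q)) = desc ({c, b, c'} : Finset (Fin 3 → Q)) := by
    ext x
    constructor
    · intro hx k
      obtain ⟨d, hd, hdk⟩ := hx k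
      exact ⟨d, by simp at hd ⊢; tauto, hdk⟩
    · intro hx k
      obtain ⟨d, hd, hdk⟩ := hx k
      simp at hd
      rcases hd with rfl | rfl | rfl
      · exact ⟨d, by simp, hdk⟩
      · exact ⟨d, by simp, hdk⟩
      · by_cases hk : k = i
        · subst hk
          exact ⟨b, by simp, by rw [hbi]; exact hdk⟩
        · exact ⟨c, by simp, by rw [hagree k hk]; exact hdk⟩
  have hcard1 : 1 ≤ ({c, b} : Finset (Fin 3 → Q)).card := Finset.card_pos.mpr ⟨c, by simp⟩
  have hcard1' : ({c, b} : Finset (Fin 3 → Q)).card ≤ 3 := by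
    calc ({c, b} : Finset (Fin 3 → Q)).card ≤ 2 := Finset.card_insert_le _ _ |>.trans (by simp)
    _ ≤ 3 := by omega
  have hcard2 : 1 ≤ ({c, b, c'} : Finset (Fin 3 → Q)).card := Finset.card_pos.mpr ⟨c, by simp⟩
  have hcard2' : ({c, b, c'} : Finset (Fin 3 → Q)).card ≤ 3 := by
    apply (Finset.card_insert_le _ _).trans
    apply Nat.succ_le_succ
    exact (Finset.card_insert_le _ _).trans (by simp)
  exact hSC _ hsub1 _ hsub2 hcard1 hcard1' hcard2 hcard2' hneq hdesceq
end

section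
/- Let C be a 3̄-separable code of length 3. Then C contains no forbidden configuration ∇, i.e., there do not exist six distinct codewords of the form (a₁,a₂,a₃), (b₁,b₂,b₃), (c₁,c₂,c₃), (a₁,b₂,c₃), (b₁,c₂,a₃), (c₁,a₂,b₃) in C with |{a_i, b_i, c_i}| = 3 for each i = 1, 2, 3. -/
open Finset

lemma nabla_key {Q : Type*} [DecidableEq (Fin 3 → Q)] (a₁ a₂ a₃ b₁ b₂ b₃ c₁ c₂ c₃ : Q) :
    ∀ (i : Fin 3) (q : Q),
      (∃ c ∈ ({![a₁,a₂,a₃], ![b₁,b₂,b₃], ![c₁,c₂,c₃]} : Finset (Fin 3 → Q)), c i = q) ↔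
      (∃ c ∈ ({![a₁,b₂,c₃], ![b₁,c₂,a₃], ![c₁,a₂,b₃]} : Finset (Fin 3 → Q)), c i = q) := by
  intro i q
  fin_cases i <;> simp <;> tauto

/-- A 3̄-SC of length 3 contains no forbidden configuration ∇. -/
theorem sc_no_nabla {Q : Type*} (C : Finset (Fin 3 → Q)) (hSC : IsSC 3 C) :
    ¬ ∃ a₁ a₂ a₃ b₁ b₂ b₃ c₁ c₂ c₃ : Q,
      (![a₁,a₂,a₃] : Fin 3 → Q) ∈ C ∧ (![b₁,b₂,b₃] : Fin 3 → Q) ∈ C ∧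
      (![c₁,c₂,c₃] : Fin 3 → Q) ∈ C ∧ (![a₁,b₂,c₃] : Fin 3 → Q) ∈ C ∧
      (![b₁,c₂,a₃] : Fin 3 → Q) ∈ C ∧ (![c₁,a₂,b₃] : Fin 3 → Q) ∈ C ∧
      ([![a₁,a₂,a₃], ![b₁,b₂,b₃], ![c₁,c₂,c₃],
        ![a₁,b₂,c₃], ![b₁,c₂,a₃], ![c₁,a₂,b₃]] : List (Fin 3 → Q)).Pairwise (· ≠ ·) ∧
      (a₁ ≠ b₁ ∧ a₁ ≠ c₁ ∧ b₁ ≠ c₁) ∧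
      (a₂ ≠ b₂ ∧ a₂ ≠ c₂ ∧ b₂ ≠ c₂) ∧
      (a₃ ≠ b₃ ∧ a₃ ≠ c₃ ∧ b₃ ≠ c₃) := by

  classical
  rintro ⟨a₁,a₂,a₃,b₁,b₂,b₃,c₁,c₂,c₃, hA,hB,hC,hD,hE,hF, hpw, h1, h2, h3⟩
  simp only [List.pairwise_cons, List.mem_cons, List.not_mem_nil, or_false,
    List.mem_singleton, forall_eq_or_imp, forall_eq, List.Pairwise.nil, and_true,
    ne_eq] at hpw
  obtain ⟨⟨hab, hac, had, hae, haf⟩, ⟨hbc, hbd, hbe, hbf⟩, ⟨hcd, hce, hcf⟩,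
    ⟨hde, hdf⟩, hef, _⟩ := hpw
  set A : Finset (Fin 3 → Q) := {![a₁,a₂,a₃], ![b₁,b₂,b₃], ![c₁,c₂,c₃]} with hAdef
  set B : Finset (Fin 3 → Q) := {![a₁,b₂,c₃], ![b₁,c₂,a₃], ![c₁,a₂,b₃]} with hBdef
  have hAsub : A ⊆ C := by
    intro x hx
    simp only [hAdef, Finset.mem_insert, Finset.mem_singleton] at hx
    rcases hx with rfl | rfl | rfl <;> assumption
  have hBsub : B ⊆ C := by
    intro x hx
    simp only [hBdef, Finset.mem_insert, Finset.mem_singleton] at hx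
    rcases hx with rfl | rfl | rfl <;> assumption
  have hAcard : A.card = 3 :=
    Finset.card_eq_three.mpr ⟨_, _, _, hab, hac, hbc, rfl⟩
  have hBcard : B.card = 3 :=
    Finset.card_eq_three.mpr ⟨_, _, _, hde, hdf, hef, rfl⟩
  have hne : A ≠ B := by
    intro h
    have : (![a₁,a₂,a₃] : Fin 3 → Q) ∈ B := h ▸ (by simp [hAdef])
    simp only [hBdef, Finset.mem_insert, Finset.mem_singleton] at this
    rcases this with h' | h' | h' <;> [exact had h'; exact hae h'; exact haf h']
  have key := nabla_key a₁ a₂ a₃ b₁ b₂ b₃ c₁ c₂ c₃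
  have hdesc : desc A = desc B := by
    ext x
    simp only [desc, Set.mem_setOf_eq]
    exact forall_congr' fun i => key i (x i)
  exact hSC A hAsub B hBsub (by omega) (by omega) (by omega) (by omega) hne hdesc
end

section
/- Let C be a 3̄-separable code of length 3. Then C contains no forbidden configuration Δ₂, i.e., there do not exist four distinct codewords (a,c,e), (a,d,f), (b,c,g), (b,d,e) in C with a ≠ b, c ≠ d, and e ∉ {f, g}. -/
open Finset

/-- A 3̄-SC of length 3 contains no forbidden configuration Δ₂. -/
theorem sc_no_delta2 {Q : Type*} (C : Finset (Fin 3 → Q)) (hSC : IsSC 3 C) :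
    ¬ ∃ a b c d e f g : Q,
      (![a,c,e] : Fin 3 → Q) ∈ C ∧ (![a,d,f] : Fin 3 → Q) ∈ C ∧
      (![b,c,g] : Fin 3 → Q) ∈ C ∧ (![b,d,e] : Fin 3 → Q) ∈ C ∧
      ([![a,c,e], ![a,d,f], ![b,c,g], ![b,d,e]] : List (Fin 3 → Q)).Pairwise (· ≠ ·) ∧
      a ≠ b ∧ c ≠ d ∧ e ≠ f ∧ e ≠ g := by
  classical
  rintro ⟨a,b,c,d,e,f,g, h1,h2,h3,h4, hpw, hab, hcd, hef, heg⟩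
  simp only [List.pairwise_cons, List.mem_cons, List.mem_singleton, List.not_mem_nil,
    forall_eq_or_imp, forall_eq] at hpw
  obtain ⟨⟨h12, h13, h14, -⟩, ⟨h23, h24, -⟩, ⟨h34, -⟩, -⟩ := hpw
  set w1 : Fin 3 → Q := ![a,c,e] with hw1
  set w2 : Fin 3 → Q := ![a,d,f] with hw2
  set w3 : Fin 3 → Q := ![b,c,g] with hw3
  set w4 : Fin 3 → Q := ![b,d,e] with hw4
  have hsub1 : ({w1,w2,w3} : Finset (Fin 3 → Q)) ⊆ C := by
    intro x hx; simp only [Finset.mem_insert, Finset.mem_singleton] at hx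
    rcases hx with rfl|rfl|rfl <;> assumption
  have hsub2 : ({w2,w3,w4} : Finset (Fin 3 → Q)) ⊆ C := by
    intro x hx; simp only [Finset.mem_insert, Finset.mem_singleton] at hx
    rcases hx with rfl|rfl|rfl <;> assumption
  have hcardle : ∀ x y z : Fin 3 → Q, ({x,y,z} : Finset (Fin 3 → Q)).card ≤ 3 := by
    intro x y z
    refine (Finset.card_insert_le _ _).trans (Nat.succ_le_succ ?_)
    exact (Finset.card_insert_le _ _).trans (by simp)
  have hcardge : ∀ x y z : Fin 3 → Q, 1 ≤ ({x,y,z} : Finset (Fin 3 → Q)).card :=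
    fun x y z => Finset.card_pos.mpr ⟨x, by simp⟩
  have hne : ({w1,w2,w3} : Finset (Fin 3 → Q)) ≠ {w2,w3,w4} := by
    intro h
    have : w1 ∈ ({w2,w3,w4} : Finset (Fin 3 → Q)) := by
      rw [← h]; simp
    simp only [Finset.mem_insert, Finset.mem_singleton] at this
    rcases this with h'|h'|h' <;> [exact h12 h'; exact h13 h'; exact h14 h']
  have hdesc : desc ({w1,w2,w3} : Finset (Fin 3 → Q)) = desc {w2,w3,w4} := by
    ext x
    simp only [desc, Set.mem_setOf_eq, Finset.mem_insert, Finset.mem_singleton]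
    constructor
    · intro h i
      obtain ⟨cc, hmem, hcc⟩ := h i
      rcases hmem with rfl|rfl|rfl
      · fin_cases i
        · exact ⟨w2, Or.inl rfl, hcc⟩
        · exact ⟨w3, Or.inr (Or.inl rfl), hcc⟩
        · exact ⟨w4, Or.inr (Or.inr rfl), hcc⟩
      · exact ⟨w2, Or.inl rfl, hcc⟩
      · exact ⟨w3, Or.inr (Or.inl rfl), hcc⟩
    · intro h i
      obtain ⟨cc, hmem, hcc⟩ := h i
      rcases hmem with rfl|rfl|rfl
      · exact ⟨w2, Or.inr (Or.inl rfl), hcc⟩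
      · exact ⟨w3, Or.inr (Or.inr rfl), hcc⟩
      · fin_cases i
        · exact ⟨w3, Or.inr (Or.inr rfl), hcc⟩
        · exact ⟨w2, Or.inr (Or.inl rfl), hcc⟩
        · exact ⟨w1, Or.inl rfl, hcc⟩
  exact hSC {w1,w2,w3} hsub1 {w2,w3,w4} hsub2 (hcardge _ _ _) (hcardle _ _ _)
    (hcardge _ _ _) (hcardle _ _ _) hne hdesc
end

section
/- Let q ≥ 3 be a prime power, D a (q,3,1) difference matrix over F_q, and let C = {d + g·(1,1,1)ᵀ : d a column of D, g ∈ F_q}. Then C is a 2-frameproof code of length 3 with q² codewords over F_q. -/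
/-- If D is a (q,3,1) difference matrix over a finite field F of order q ≥ 3,
then C = {column of D + g·(1,1,1)ᵀ : g ∈ F} is a 2-FPC with q² codewords. -/
theorem dm_gives_fpc {F : Type*} [Field F] [Fintype F] [DecidableEq F]
    (q : ℕ) (hq : Fintype.card F = q) (hq3 : 3 ≤ q)
    (D : Fin 3 → Fin q → F)
    (hDM : ∀ s t : Fin 3, s ≠ t → Function.Bijective (fun i : Fin q => D s i - D t i))
    (C : Finset (Fin 3 → F))
    (hC : C = Finset.image (fun p : Fin q × F => fun j => D j p.1 + p.2) Finset.univ) :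
    C.card = q ^ 2 ∧ IsFPC 2 C := by
  subst hC
  have key : ∀ (i i' : Fin q) (g g' : F) (s t : Fin 3), s ≠ t →
      D s i + g = D s i' + g' → D t i + g = D t i' + g' → i = i' ∧ g = g' := by
    intro i i' g g' s t hst h1 h2
    have hd : D s i - D t i = D s i' - D t i' := by
      linear_combination h1 - h2
    have hi : i = i' := (hDM s t hst).injective hd
    subst hi
    have hg : g = g' := by linear_combination h1
    exact ⟨rfl, hg⟩
  have hinj : Function.Injective (fun p : Fin q × F => fun j : Fin 3 => D j p.1 + p.2) := by
    rintro ⟨i, g⟩ ⟨i', g'⟩ h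
    have h0 := congrFun h 0
    have h1 := congrFun h 1
    obtain ⟨hi, hg⟩ := key i i' g g' 0 1 (by decide) h0 h1
    simp [hi, hg]
  constructor
  · rw [Finset.card_image_of_injective _ hinj]
    simp [hq, sq]
  · intro C' hsub hcard
    apply Set.Subset.antisymm
    · rintro x ⟨hxdesc, hxC⟩
      choose f hf hf' using hxdesc
      have hlt : Fintype.card {y // y ∈ C'} < Fintype.card (Fin 3) := by
        rw [Fintype.card_coe, Fintype.card_fin]
        omega
      obtain ⟨s, t, hst, hft⟩ :=
        Fintype.exists_ne_map_eq_of_card_lt (fun j : Fin 3 => (⟨f j, hf j⟩ : {y // y ∈ C'})) hlt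
      have hfst : f s = f t := congrArg Subtype.val hft
      simp only [Finset.coe_image, Set.mem_image, Finset.mem_coe] at hxC
      obtain ⟨⟨i, g⟩, _, hx⟩ := hxC
      have hcC : f s ∈ Finset.image (fun p : Fin q × F => fun j => D j p.1 + p.2)
          Finset.univ := hsub (hf s)
      rw [Finset.mem_image] at hcC
      obtain ⟨⟨i', g'⟩, _, hc⟩ := hcC
      have e1 : D s i + g = D s i' + g' := by
        have := hf' s
        rw [← hx, ← hc] at this
        exact this.symm
      have e2 : D t i + g = D t i' + g' := by
        have := hf' t
        rw [← hx, ← hfst, ← hc] at this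
        exact this.symm
      obtain ⟨hi, hg⟩ := key i i' g g' s t hst e1 e2
      have : x = f s := by rw [← hx, ← hc, hi, hg]
      rw [this]
      exact hf s
    · intro c hc
      exact ⟨fun i => ⟨c, hc, rfl⟩, hsub hc⟩
end
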